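/- arXiv:2407.15388 — 2 statements merged into one kernel-verified Lean document; each statement's English description precedes it below -/
import Mathlib

section
/- Let μ be the product of the exponential distribution of rate 1 (density e^{−v} on [0,∞)) and the Gamma distribution with shape α > 0 and rate φ > 0 (density φ^α z^{α−1} e^{−zφ}/Γ(α) on (0,∞)). Then for every M ≥ 0, μ({(v,z) : v > z·M}) = (1 + M/φ)^{−α}. Hence the vitality model with initial vitality V(0) ~ Exp(1) independent of a Gamma-distributed depletion multiplier Z, and trend dY(t) = Z·μ_x(t)dt, has T-year survival probability (1 + (∫₀^T μ_x(t)dt)/φ)^{−α}, matching the Gamma-Gompertz model. -/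
/-!
Conditionally on `Z = z`, the exponential vitality outlives the trend with probability
`exp (-z M)`, so the survival probability is the Laplace transform of `Gamma(α, φ)` at `M`.
Multiplying the `Gamma(α, φ)` density by `exp (-M z)` gives `(φ / (φ + M)) ^ α` times the
`Gamma(α, φ + M)` density, whose total mass is one.
-/

open MeasureTheory Set ProbabilityTheory intervalIntegral Real

namespace ProbabilityTheory

lemma expMeasure_Ioi {r x : ℝ} (hr : 0 < r) (hx : 0 ≤ x) :
    expMeasure r (Ioi x) = ENNReal.ofReal (exp (-(r * x))) := by
  have := isProbabilityMeasure_expMeasure hr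
  have hexp_le_one : exp (-(r * x)) ≤ 1 := exp_le_one_iff.2 (neg_nonpos.2 (by positivity))
  rw [← compl_Iic, prob_compl_eq_one_sub measurableSet_Iic, ← ofReal_cdf, cdf_expMeasure_eq hr,
    if_pos hx, ← ENNReal.ofReal_one, ← ENNReal.ofReal_sub _ (sub_nonneg.2 hexp_le_one),
    sub_sub_cancel]

lemma ae_nonneg_gammaMeasure (a r : ℝ) : ∀ᵐ z ∂gammaMeasure a r, 0 ≤ z := by
  rw [gammaMeasure, ae_withDensity_iff (f := gammaPDF a r)
    (measurable_gammaPDFReal a r).ennreal_ofReal]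
  exact Filter.Eventually.of_forall fun z hz => not_lt.mp fun hz' => hz (gammaPDF_of_neg hz')

lemma gammaPDF_mul_exp_neg_mul {a r s : ℝ} (hr : 0 ≤ r) (hrs : 0 < r + s) (z : ℝ) :
    gammaPDF a r z * ENNReal.ofReal (exp (-(s * z)))
      = ENNReal.ofReal ((r / (r + s)) ^ a) * gammaPDF a (r + s) z := by
  rcases lt_or_ge z 0 with hz | hz
  · rw [gammaPDF_of_neg hz, gammaPDF_of_neg hz, zero_mul, mul_zero]
  rw [gammaPDF_of_nonneg hz, gammaPDF_of_nonneg hz, ← ENNReal.ofReal_mul' (exp_pos _).le,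
    ← ENNReal.ofReal_mul (by positivity)]
  have hpow : r ^ a = (r / (r + s)) ^ a * (r + s) ^ a := by
    rw [← mul_rpow (div_nonneg hr hrs.le) hrs.le, div_mul_cancel₀ _ hrs.ne']
  have hexp : exp (-(r * z)) * exp (-(s * z)) = exp (-((r + s) * z)) := by
    rw [← exp_add]; ring_nf
  congr 1
  calc r ^ a / Gamma a * z ^ (a - 1) * exp (-(r * z)) * exp (-(s * z))
      = r ^ a / Gamma a * z ^ (a - 1) * (exp (-(r * z)) * exp (-(s * z))) := by ring
    _ = _ := by rw [hexp, hpow]; ring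

lemma lintegral_exp_neg_mul_gammaMeasure {a r s : ℝ} (ha : 0 < a) (hr : 0 ≤ r)
    (hrs : 0 < r + s) :
    ∫⁻ z, ENNReal.ofReal (exp (-(s * z))) ∂gammaMeasure a r
      = ENNReal.ofReal ((r / (r + s)) ^ a) := by
  rw [gammaMeasure, lintegral_withDensity_eq_lintegral_mul _ (f := gammaPDF a r)
    (measurable_gammaPDFReal a r).ennreal_ofReal (by fun_prop)]
  simp only [Pi.mul_apply, gammaPDF_mul_exp_neg_mul hr hrs]
  rw [lintegral_const_mul _ (f := gammaPDF a (r + s))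
      (measurable_gammaPDFReal a (r + s)).ennreal_ofReal,
    lintegral_gammaPDF_eq_one ha hrs, mul_one]

lemma expMeasure_prod_setOf_mul_lt {r M : ℝ} (hr : 0 < r) (hM : 0 ≤ M) (ν : Measure ℝ)
    [SFinite ν] (hν : ∀ᵐ z ∂ν, 0 ≤ z) :
    (expMeasure r).prod ν {p : ℝ × ℝ | p.2 * M < p.1}
      = ∫⁻ z, ENNReal.ofReal (exp (-(r * M * z))) ∂ν := by
  have := isProbabilityMeasure_expMeasure hr
  rw [Measure.prod_apply_symm (measurableSet_lt (measurable_snd.mul_const M) measurable_fst)]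
  refine lintegral_congr_ae (hν.mono fun z hz => ?_)
  change expMeasure r (Ioi (z * M)) = _
  rw [expMeasure_Ioi hr (mul_nonneg hz hM)]
  ring_nf

lemma expMeasure_prod_gammaMeasure_setOf_mul_lt {a r M : ℝ} (ha : 0 < a) (hr : 0 < r)
    (hM : 0 ≤ M) :
    (expMeasure 1).prod (gammaMeasure a r) {p : ℝ × ℝ | p.2 * M < p.1}
      = ENNReal.ofReal ((1 + M / r) ^ (-a)) := by
  have := isProbabilityMeasure_gammaMeasure ha hr
  rw [expMeasure_prod_setOf_mul_lt one_pos hM _ (ae_nonneg_gammaMeasure a r), one_mul,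
    lintegral_exp_neg_mul_gammaMeasure ha hr.le (by linarith), rpow_neg (by positivity),
    ← inv_rpow (by positivity), inv_eq_one_div, one_add_div hr.ne', one_div_div]

end ProbabilityTheory

/-- Vitality model with `V(0) ~ Exp(1)` independent of a Gamma(α, φ)-distributed
depletion multiplier `Z` and trend `dY(t) = Z·μₓ(t) dt`: under the product measure
of `Exp(1)` and `Gamma(α, φ)`, the probability of `{(v, z) : v > z·M}` equals
`(1 + M/φ)^{-α}` for every `M ≥ 0`; hence the `T`-year survival probability, with
`M = ∫₀^T μₓ t dt`, is `(1 + (∫₀^T μₓ t dt)/φ)^{-α}`, matching the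
Gamma-Gompertz model. -/
theorem exp_gamma_vitality_survival
    (α φ : ℝ) (hα : 0 < α) (hφ : 0 < φ) :
    (∀ M : ℝ, 0 ≤ M →
      ((expMeasure 1).prod (gammaMeasure α φ)) {p : ℝ × ℝ | p.2 * M < p.1}
        = ENNReal.ofReal ((1 + M / φ) ^ (-α))) ∧
    ∀ (T : ℝ) (μx : ℝ → ℝ), 0 ≤ T → (∀ t ∈ Set.Icc 0 T, 0 ≤ μx t) →
      IntervalIntegrable μx volume 0 T →
      ((expMeasure 1).prod (gammaMeasure α φ))
          {p : ℝ × ℝ | p.2 * ∫ t in (0:ℝ)..T, μx t < p.1}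
        = ENNReal.ofReal ((1 + (∫ t in (0:ℝ)..T, μx t) / φ) ^ (-α)) :=
  ⟨fun _ hM => expMeasure_prod_gammaMeasure_setOf_mul_lt hα hφ hM,
    fun _ _ hT hμx _ => expMeasure_prod_gammaMeasure_setOf_mul_lt hα hφ
      (integral_nonneg hT hμx)⟩
end

section
/- Let n ≥ 1 be an integer, σ > 0, δ ∈ ℝ, λ > 0, q > 0, let p₁, …, p_n > 0 with Σ_{i=1}^n p_i = 1, and let 0 < α₁ < α₂ < … < α_n. Define h(y) = (1/2)σ²y² − δy + Σ_{i=1}^n λ p_i α_i/(y + α_i) − λ − q on ℝ ∖ {−α₁, …, −α_n}. Then h has exactly n + 2 real zeros θ_{n+2} < θ_{n+1} < … < θ₂ < 0 < θ₁: exactly one zero in (0, ∞), exactly one in (−α₁, 0), exactly one in each interval (−α_{i+1}, −α_i) for i = 1, …, n−1, and exactly one in (−∞, −α_n). -/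
/-!
Multiplying `h` by `∏ᵢ (y + αᵢ)` gives a polynomial `P` of degree at most `n + 2` whose zeros
off the poles are those of `h`. At the poles, `P (-αᵢ) = λ pᵢ αᵢ ∏_{j ≠ i} (αⱼ - αᵢ)`, whose
sign alternates in `i`, starting positive at `-α₁`. Moreover `P 0 = -q ∏ αᵢ < 0`, and since
`h → +∞` at `±∞`, `P` is positive at some `M > 0` and has sign `(-1)ⁿ` at some `N < -αₙ`.
So `P` alternates in sign at the `n + 3` points `M > 0 > -α₁ > ⋯ > -αₙ > N`: each of the
`n + 2` gaps contains a root, and there is no other root because `deg P ≤ n + 2`.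
-/

open Real Set Polynomial Filter Topology

theorem exists_mem_Ioo_eq_zero_of_mul_neg {f : ℝ → ℝ} {a b : ℝ} (hab : a ≤ b)
    (hf : ContinuousOn f (Icc a b)) (h : f a * f b < 0) : ∃ x ∈ Ioo a b, f x = 0 := by
  rcases mul_neg_iff.1 h with ⟨ha, hb⟩ | ⟨ha, hb⟩
  · exact intermediate_value_Ioo' hab hf ⟨hb, ha⟩
  · exact intermediate_value_Ioo hab hf ⟨ha, hb⟩

theorem Finset.neg_one_pow_card_mul_prod_pos {ι R : Type*} [CommRing R] [PartialOrder R]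
    [IsStrictOrderedRing R] {s : Finset ι} {f : ι → R} (hf : ∀ i ∈ s, f i < 0) :
    0 < (-1) ^ s.card * ∏ i ∈ s, f i := by
  rw [← Finset.prod_neg]
  exact Finset.prod_pos fun i hi => neg_pos.2 (hf i hi)

theorem Polynomial.mem_of_isRoot_of_natDegree_le_card {R : Type*} [CommRing R] [IsDomain R]
    {p : R[X]} (hp : p ≠ 0) {s : Finset R} (hs : ∀ x ∈ s, p.IsRoot x)
    (hcard : p.natDegree ≤ s.card) {x : R} (hx : p.IsRoot x) : x ∈ s := by
  classical
  by_contra hxs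
  have hsub : (insert x s).val ⊆ p.roots := fun y hy => (mem_roots hp).2 <| by
    rcases Finset.mem_insert.1 hy with rfl | hy
    exacts [hx, hs y hy]
  have := card_le_degree_of_subset_roots hsub
  rw [Finset.card_insert_of_notMem hxs] at this
  omega

section Alternating

variable {P : ℝ[X]} {m : ℕ} {t : ℕ → ℝ}

theorem Polynomial.exists_roots_of_alternating (hdeg : P.natDegree ≤ m)
    (ht : StrictAntiOn t (Iic m)) (hsign : ∀ k ≤ m, 0 < (-1) ^ k * P.eval (t k)) :
    ∃ r : ℕ → ℝ, (∀ k < m, r k ∈ Ioo (t (k + 1)) (t k)) ∧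
      ∀ x, P.IsRoot x ↔ ∃ k < m, r k = x := by
  have hgap : ∀ k < m, ∃ x ∈ Ioo (t (k + 1)) (t k), P.IsRoot x := by
    intro k hk
    have hlt : t (k + 1) < t k := ht (mem_Iic.2 hk.le) (mem_Iic.2 hk) k.lt_succ_self
    refine exists_mem_Ioo_eq_zero_of_mul_neg hlt.le P.continuousOn ?_
    have h₀ := hsign k hk.le
    have h₁ := hsign (k + 1) hk
    rw [pow_succ] at h₁
    rcases neg_one_pow_eq_or ℝ k with hs | hs <;> rw [hs] at h₀ h₁ <;> nlinarith
  choose! r hr hroot using hgap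
  have hr_anti : StrictAntiOn r (Iio m) := fun j hj k hk hjk =>
    ((hr k hk).2.trans_le (ht.antitoneOn (mem_Iic.2 hj) (mem_Iic.2 (le_of_lt hk)) hjk)).trans
      (hr j hj).1
  have hP : P ≠ 0 := by
    rintro rfl
    simpa using hsign 0 m.zero_le
  refine ⟨r, hr, fun x => ⟨fun hx => ?_, fun ⟨k, hk, hkx⟩ => hkx ▸ hroot k hk⟩⟩
  have hcard : ((Finset.range m).image r).card = m := by
    rw [Finset.card_image_of_injOn (by simpa using hr_anti.injOn), Finset.card_range]
  simpa using mem_of_isRoot_of_natDegree_le_card hP (s := (Finset.range m).image r)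
    (by simpa using hroot) (hdeg.trans hcard.ge) hx

theorem Polynomial.existsUnique_isRoot_mem_Ioo_of_alternating (hdeg : P.natDegree ≤ m)
    (ht : StrictAntiOn t (Iic m)) (hsign : ∀ k ≤ m, 0 < (-1) ^ k * P.eval (t k)) {k : ℕ}
    (hk : k < m) : ∃! x, x ∈ Ioo (t (k + 1)) (t k) ∧ P.IsRoot x := by
  obtain ⟨r, hr, hroots⟩ := exists_roots_of_alternating hdeg ht hsign
  refine ⟨r k, ⟨hr k hk, (hroots _).2 ⟨k, hk, rfl⟩⟩, ?_⟩
  rintro _ ⟨hx, hxr⟩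
  obtain ⟨j, hj, rfl⟩ := (hroots _).1 hxr
  have hjk : j < k + 1 :=
    (ht.lt_iff_gt (mem_Iic.2 hk) (mem_Iic.2 hj.le)).1 (hx.1.trans (hr j hj).2)
  have hkj : k < j + 1 :=
    (ht.lt_iff_gt (mem_Iic.2 hj) (mem_Iic.2 hk.le)).1 ((hr j hj).1.trans hx.2)
  rw [show j = k by omega]

theorem Polynomial.existsUnique_isRoot_mem_Ioi_of_alternating (hdeg : P.natDegree ≤ m)
    (ht : StrictAntiOn t (Iic m)) (hsign : ∀ k ≤ m, 0 < (-1) ^ k * P.eval (t k)) (hm : 0 < m) :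
    ∃! x, x ∈ Ioi (t 1) ∧ P.IsRoot x := by
  obtain ⟨r, hr, hroots⟩ := exists_roots_of_alternating hdeg ht hsign
  refine ⟨r 0, ⟨(hr 0 hm).1, (hroots _).2 ⟨0, hm, rfl⟩⟩, ?_⟩
  rintro _ ⟨hx, hxr⟩
  obtain ⟨j, hj, rfl⟩ := (hroots _).1 hxr
  have hj0 : j < 1 := (ht.lt_iff_gt (mem_Iic.2 hm) (mem_Iic.2 hj.le)).1 (hx.trans (hr j hj).2)
  rw [show j = 0 by omega]

theorem Polynomial.existsUnique_isRoot_mem_Iio_of_alternating (hdeg : P.natDegree ≤ m)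
    (ht : StrictAntiOn t (Iic m)) (hsign : ∀ k ≤ m, 0 < (-1) ^ k * P.eval (t k)) (hm : 0 < m) :
    ∃! x, x ∈ Iio (t (m - 1)) ∧ P.IsRoot x := by
  obtain ⟨r, hr, hroots⟩ := exists_roots_of_alternating hdeg ht hsign
  have hm' : m - 1 < m := Nat.sub_one_lt_of_lt hm
  refine ⟨r (m - 1), ⟨(hr _ hm').2, (hroots _).2 ⟨m - 1, hm', rfl⟩⟩, ?_⟩
  rintro _ ⟨hx, hxr⟩
  obtain ⟨j, hj, rfl⟩ := (hroots _).1 hxr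
  have hjm : m - 1 < j + 1 :=
    (ht.lt_iff_gt (mem_Iic.2 hj) (mem_Iic.2 hm'.le)).1 ((hr j hj).1.trans hx)
  rw [show j = m - 1 by omega]

theorem Polynomial.exists_mem_Ioo_of_isRoot_of_alternating (hdeg : P.natDegree ≤ m)
    (ht : StrictAntiOn t (Iic m)) (hsign : ∀ k ≤ m, 0 < (-1) ^ k * P.eval (t k)) {x : ℝ}
    (hx : P.IsRoot x) : ∃ k < m, x ∈ Ioo (t (k + 1)) (t k) := by
  obtain ⟨r, hr, hroots⟩ := exists_roots_of_alternating hdeg ht hsign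
  obtain ⟨k, hk, rfl⟩ := (hroots x).1 hx
  exact ⟨k, hk, hr k hk⟩

end Alternating

section PartialFraction

variable {K : Type*} [Field K]

noncomputable def partialFracNumerator (Q : K[X]) (c a : ℕ → K) (n : ℕ) : K[X] :=
  Q * ∏ j ∈ Finset.range n, (X + C (a j)) +
    ∑ i ∈ Finset.range n, C (c i) * ∏ j ∈ (Finset.range n).erase i, (X + C (a j))

theorem eval_partialFracNumerator (Q : K[X]) (c a : ℕ → K) {n : ℕ} {y : K}
    (hy : ∀ j < n, y + a j ≠ 0) :
    (partialFracNumerator Q c a n).eval y =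
      (Q.eval y + ∑ i ∈ Finset.range n, c i / (y + a i)) * ∏ j ∈ Finset.range n, (y + a j) := by
  simp only [partialFracNumerator, eval_add, eval_mul, eval_prod, eval_finsetSum, eval_X, eval_C,
    add_mul, Finset.sum_mul]
  congr 1
  refine Finset.sum_congr rfl fun i hi => ?_
  rw [← Finset.mul_prod_erase _ _ hi, ← mul_assoc,
    div_mul_cancel₀ _ (hy i (Finset.mem_range.1 hi))]

theorem eval_neg_partialFracNumerator (Q : K[X]) (c a : ℕ → K) {n i : ℕ} (hi : i < n) :
    (partialFracNumerator Q c a n).eval (-a i) =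
      c i * ∏ j ∈ (Finset.range n).erase i, (a j - a i) := by
  have hi' := Finset.mem_range.2 hi
  simp only [partialFracNumerator, eval_add, eval_mul, eval_prod, eval_finsetSum, eval_X, eval_C]
  rw [Finset.prod_eq_zero hi' (neg_add_cancel _), mul_zero, zero_add, Finset.sum_eq_single i]
  · simp_rw [neg_add_eq_sub]
  · intro j _ hji
    rw [Finset.prod_eq_zero (Finset.mem_erase.2 ⟨Ne.symm hji, hi'⟩) (neg_add_cancel _), mul_zero]
  · exact fun h => absurd hi' h

theorem natDegree_prod_X_add_C_le {ι : Type*} (a : ι → K) (s : Finset ι) :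
    (∏ j ∈ s, (X + C (a j))).natDegree ≤ s.card :=
  (natDegree_prod_le _ _).trans (by simp)

theorem natDegree_partialFracNumerator_le (Q : K[X]) (c a : ℕ → K) (n : ℕ) :
    (partialFracNumerator Q c a n).natDegree ≤ Q.natDegree + n := by
  refine (natDegree_add_le _ _).trans
    (max_le ?_ (natDegree_sum_le_of_forall_le _ _ fun i _ => ?_))
  · exact natDegree_mul_le.trans (by simpa using natDegree_prod_X_add_C_le a (Finset.range n))
  · refine (natDegree_C_mul_le _ _).trans ((natDegree_prod_X_add_C_le a _).trans ?_)
    exact (Finset.card_erase_le).trans (by simp)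

end PartialFraction

theorem tendsto_quadratic_add_sum_div_atTop {a : ℝ} (ha : 0 < a) (b c : ℝ) (d e : ℕ → ℝ)
    (s : Finset ℕ) :
    Tendsto (fun y => a * y ^ 2 + b * y + c + ∑ i ∈ s, d i / (y + e i)) atTop atTop := by
  have hquad : Tendsto (fun y => y * (a * y + b)) atTop atTop :=
    tendsto_id.atTop_mul_atTop₀
      (tendsto_atTop_add_const_right _ b (tendsto_id.const_mul_atTop ha))
  have hfrac : Tendsto (fun y => c + ∑ i ∈ s, d i / (y + e i)) atTop (𝓝 (c + 0)) :=
    tendsto_const_nhds.add <| by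
      simpa using tendsto_finsetSum s fun i _ =>
        (tendsto_atTop_add_const_right _ (e i) tendsto_id).const_div_atTop (d i)
  exact (hquad.atTop_add hfrac).congr fun y => by ring

theorem tendsto_quadratic_add_sum_div_atBot {a : ℝ} (ha : 0 < a) (b c : ℝ) (d e : ℕ → ℝ)
    (s : Finset ℕ) :
    Tendsto (fun y => a * y ^ 2 + b * y + c + ∑ i ∈ s, d i / (y + e i)) atBot atTop := by
  have hquad : Tendsto (fun y => y * (a * y + b)) atBot atTop :=
    tendsto_id.atBot_mul_atBot₀
      (tendsto_atBot_add_const_right _ b (tendsto_id.const_mul_atBot ha))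
  have hfrac : Tendsto (fun y => c + ∑ i ∈ s, d i / (y + e i)) atBot (𝓝 (c + 0)) :=
    tendsto_const_nhds.add <| by
      simpa using tendsto_finsetSum s fun i _ =>
        (tendsto_atBot_add_const_right _ (e i) tendsto_id).const_div_atBot (d i)
  exact (hquad.atTop_add hfrac).congr fun y => by ring

section CramerLundberg

variable {σ δ lam q M N : ℝ} {p α : ℕ → ℝ} {n : ℕ}

noncomputable def cramerLundbergFun (σ δ lam q : ℝ) (p α : ℕ → ℝ) (n : ℕ) (y : ℝ) : ℝ :=
  1 / 2 * σ ^ 2 * y ^ 2 - δ * y + (∑ i ∈ Finset.range n, lam * p i * α i / (y + α i)) - lam - q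

noncomputable def cramerLundbergNumerator (σ δ lam q : ℝ) (p α : ℕ → ℝ) (n : ℕ) : ℝ[X] :=
  partialFracNumerator (C (σ ^ 2 / 2) * X ^ 2 + C (-δ) * X + C (-(lam + q)))
    (fun i => lam * p i * α i) α n

theorem eval_cramerLundbergNumerator {y : ℝ} (hy : ∀ i < n, y ≠ -α i) :
    (cramerLundbergNumerator σ δ lam q p α n).eval y =
      cramerLundbergFun σ δ lam q p α n y * ∏ j ∈ Finset.range n, (y + α j) := by
  rw [cramerLundbergNumerator, eval_partialFracNumerator _ _ _ fun j hj h =>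
    hy j hj (eq_neg_of_add_eq_zero_left h), cramerLundbergFun]
  simp only [eval_add, eval_mul, eval_C, eval_pow, eval_X]
  ring

theorem isRoot_cramerLundbergNumerator_iff {y : ℝ} (hy : ∀ i < n, y ≠ -α i) :
    (cramerLundbergNumerator σ δ lam q p α n).IsRoot y ↔
      cramerLundbergFun σ δ lam q p α n y = 0 := by
  rw [IsRoot.def, eval_cramerLundbergNumerator hy, mul_eq_zero, or_iff_left]
  exact Finset.prod_ne_zero_iff.2 fun j hj h =>
    hy j (Finset.mem_range.1 hj) (eq_neg_of_add_eq_zero_left h)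

theorem existsUnique_cramerLundbergFun_eq_zero_iff {I : Set ℝ}
    (hI : ∀ y ∈ I, ∀ i < n, y ≠ -α i) :
    (∃! y, y ∈ I ∧ cramerLundbergFun σ δ lam q p α n y = 0) ↔
      ∃! y, y ∈ I ∧ (cramerLundbergNumerator σ δ lam q p α n).IsRoot y :=
  existsUnique_congr fun y => and_congr_right fun hy =>
    (isRoot_cramerLundbergNumerator_iff (hI y hy)).symm

theorem natDegree_cramerLundbergNumerator_le :
    (cramerLundbergNumerator σ δ lam q p α n).natDegree ≤ n + 2 :=
  (natDegree_partialFracNumerator_le _ _ _ _).trans <| by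
    rw [add_comm n]
    exact Nat.add_le_add_right natDegree_quadratic_le n

theorem cramerLundbergFun_zero (hpsum : ∑ i ∈ Finset.range n, p i = 1)
    (hαpos : ∀ i < n, 0 < α i) : cramerLundbergFun σ δ lam q p α n 0 = -q := by
  have hterm : ∀ i ∈ Finset.range n, lam * p i * α i / (0 + α i) = lam * p i := fun i hi => by
    rw [zero_add, mul_div_cancel_right₀ _ (hαpos i (Finset.mem_range.1 hi)).ne']
  rw [cramerLundbergFun, Finset.sum_congr rfl hterm, ← Finset.mul_sum, hpsum]
  ring

theorem eval_zero_cramerLundbergNumerator_neg (hq : 0 < q)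
    (hpsum : ∑ i ∈ Finset.range n, p i = 1) (hαpos : ∀ i < n, 0 < α i) :
    (cramerLundbergNumerator σ δ lam q p α n).eval 0 < 0 := by
  rw [eval_cramerLundbergNumerator fun i hi h => (hαpos i hi).ne' (neg_eq_zero.1 h.symm),
    cramerLundbergFun_zero hpsum hαpos, neg_mul]
  refine neg_neg_of_pos (mul_pos hq (Finset.prod_pos fun j hj => ?_))
  simpa using hαpos j (Finset.mem_range.1 hj)

theorem apply_le_apply_sub_one (hα : MonotoneOn α (Iio n)) {i : ℕ} (hi : i < n) :
    α i ≤ α (n - 1) :=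
  hα hi (Nat.sub_one_lt_of_lt hi) (Nat.le_sub_one_of_lt hi)

theorem ne_neg_of_mem_Ioo_neg (hα : StrictMonoOn α (Iio n)) {i j : ℕ} (hi : i + 1 < n)
    (hj : j < n) {y : ℝ} (hy : y ∈ Ioo (-α (i + 1)) (-α i)) : y ≠ -α j := by
  rintro rfl
  have hji : j < i + 1 := (hα.lt_iff_lt hj hi).1 (neg_lt_neg_iff.1 hy.1)
  have hij : i < j := (hα.lt_iff_lt (Nat.lt_of_succ_lt hi) hj).1 (neg_lt_neg_iff.1 hy.2)
  omega

theorem neg_one_pow_mul_prod_erase_sub_pos (hα : StrictMonoOn α (Iio n)) {i : ℕ}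
    (hi : i < n) :
    0 < (-1) ^ i * ∏ j ∈ (Finset.range n).erase i, (α j - α i) := by
  have hsplit : (Finset.range n).erase i = Finset.range i ∪ Finset.Ioo i n := by
    ext j
    simp only [Finset.mem_erase, Finset.mem_range, Finset.mem_union, Finset.mem_Ioo]
    omega
  have hdisj : Disjoint (Finset.range i) (Finset.Ioo i n) :=
    Finset.disjoint_left.2 fun j h₁ h₂ => by simp at h₁ h₂; omega
  rw [hsplit, Finset.prod_union hdisj, ← mul_assoc]
  refine mul_pos ?_ (Finset.prod_pos fun j hj => ?_)
  · simpa using Finset.neg_one_pow_card_mul_prod_pos (s := Finset.range i) fun j hj =>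
      sub_neg.2 (hα (hi.trans' (Finset.mem_range.1 hj)) hi (Finset.mem_range.1 hj))
  · obtain ⟨hij, hjn⟩ := Finset.mem_Ioo.1 hj
    exact sub_pos.2 (hα hi hjn hij)

theorem neg_one_pow_mul_eval_neg_cramerLundbergNumerator_pos (hlam : 0 < lam)
    (hp : ∀ i < n, 0 < p i) (hαpos : ∀ i < n, 0 < α i) (hα : StrictMonoOn α (Iio n)) {i : ℕ}
    (hi : i < n) : 0 < (-1) ^ i * (cramerLundbergNumerator σ δ lam q p α n).eval (-α i) := by
  rw [cramerLundbergNumerator, eval_neg_partialFracNumerator _ _ _ hi, mul_left_comm]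
  exact mul_pos (by have := hp i hi; have := hαpos i hi; positivity)
    (neg_one_pow_mul_prod_erase_sub_pos hα hi)

theorem tendsto_cramerLundbergFun_atTop (hσ : 0 < σ) :
    Tendsto (cramerLundbergFun σ δ lam q p α n) atTop atTop :=
  (tendsto_quadratic_add_sum_div_atTop (a := σ ^ 2 / 2) (by positivity) (-δ) (-(lam + q))
    (fun i => lam * p i * α i) α _).congr fun y => by
    rw [cramerLundbergFun]; ring

theorem tendsto_cramerLundbergFun_atBot (hσ : 0 < σ) :
    Tendsto (cramerLundbergFun σ δ lam q p α n) atBot atTop :=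
  (tendsto_quadratic_add_sum_div_atBot (a := σ ^ 2 / 2) (by positivity) (-δ) (-(lam + q))
    (fun i => lam * p i * α i) α _).congr fun y => by
    rw [cramerLundbergFun]; ring

theorem exists_pos_eval_cramerLundbergNumerator_pos (hσ : 0 < σ) (hαpos : ∀ i < n, 0 < α i) :
    ∃ M, 0 < M ∧ 0 < (cramerLundbergNumerator σ δ lam q p α n).eval M := by
  obtain ⟨M, hfM, hM⟩ :=
    ((tendsto_cramerLundbergFun_atTop hσ).eventually_gt_atTop 0 |>.and
      (eventually_gt_atTop 0)).exists
  have hpos : ∀ i < n, 0 < M + α i := fun i hi => add_pos hM (hαpos i hi)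
  refine ⟨M, hM, ?_⟩
  rw [eval_cramerLundbergNumerator fun i hi h => (hpos i hi).ne' (by rw [h, neg_add_cancel])]
  exact mul_pos hfM (Finset.prod_pos fun j hj => hpos j (Finset.mem_range.1 hj))

theorem exists_lt_neg_one_pow_mul_eval_cramerLundbergNumerator_pos (hσ : 0 < σ) {a : ℝ}
    (ha : ∀ i < n, a ≤ -α i) :
    ∃ N < a, 0 < (-1) ^ n * (cramerLundbergNumerator σ δ lam q p α n).eval N := by
  obtain ⟨N, hfN, hN⟩ :=
    ((tendsto_cramerLundbergFun_atBot hσ).eventually_gt_atTop 0 |>.and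
      (eventually_lt_atBot a)).exists
  have hneg : ∀ i < n, N + α i < 0 := fun i hi => by linarith [ha i hi]
  refine ⟨N, hN, ?_⟩
  rw [eval_cramerLundbergNumerator fun i hi h => (hneg i hi).ne (by rw [h, neg_add_cancel]),
    mul_left_comm]
  simpa using mul_pos hfN (Finset.neg_one_pow_card_mul_prod_pos (s := Finset.range n)
    fun j hj => hneg j (Finset.mem_range.1 hj))

noncomputable def cramerLundbergNodes (M N : ℝ) (α : ℕ → ℝ) (n : ℕ) : ℕ → ℝ
  | 0 => M
  | 1 => 0
  | k + 2 => if k < n then -α k else N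

theorem cramerLundbergNodes_add_two {k : ℕ} (hk : k < n) :
    cramerLundbergNodes M N α n (k + 2) = -α k :=
  if_pos hk

theorem strictAntiOn_cramerLundbergNodes (hn : 0 < n) (hM : 0 < M) (hα0 : 0 < α 0)
    (hα : StrictMonoOn α (Iio n)) (hN : N < -α (n - 1)) :
    StrictAntiOn (cramerLundbergNodes M N α n) (Iic (n + 2)) := by
  refine strictAntiOn_Iic_of_succ_lt fun k hk => ?_
  match k with
  | 0 => exact hM
  | 1 =>
    show cramerLundbergNodes M N α n (0 + 2) < 0
    rw [cramerLundbergNodes_add_two hn]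
    exact neg_neg_of_pos hα0
  | k + 2 =>
    have hkn : k < n := by omega
    simp only [Order.succ_eq_add_one, cramerLundbergNodes, if_pos hkn]
    split_ifs with hk1
    · exact neg_lt_neg (hα hkn hk1 k.lt_succ_self)
    · rwa [show k = n - 1 by omega]

theorem neg_one_pow_mul_eval_cramerLundbergNodes_pos {P : ℝ[X]} (hM : 0 < P.eval M)
    (h0 : P.eval 0 < 0) (hpole : ∀ i < n, 0 < (-1) ^ i * P.eval (-α i))
    (hN : 0 < (-1) ^ n * P.eval N) {k : ℕ} (hk : k ≤ n + 2) :
    0 < (-1) ^ k * P.eval (cramerLundbergNodes M N α n k) := by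
  match k with
  | 0 => simpa [cramerLundbergNodes] using hM
  | 1 => simpa [cramerLundbergNodes] using h0
  | k + 2 =>
    simp only [cramerLundbergNodes, pow_add, neg_one_sq, mul_one]
    split_ifs with hkn
    · exact hpole k hkn
    · rwa [show k = n by omega]

theorem cramerLundbergNodes_gap_cases (hn : 0 < n) {k : ℕ} (hk : k < n + 2) {y : ℝ}
    (hy : y ∈ Ioo (cramerLundbergNodes M N α n (k + 1)) (cramerLundbergNodes M N α n k)) :
    y ∈ Ioi 0 ∨ y ∈ Ioo (-α 0) 0 ∨ (∃ i, i + 1 < n ∧ y ∈ Ioo (-α (i + 1)) (-α i)) ∨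
      y ∈ Iio (-α (n - 1)) := by
  rcases k with _ | _ | k
  · exact Or.inl hy.1
  · rw [cramerLundbergNodes_add_two hn] at hy
    exact Or.inr (Or.inl hy)
  · rw [cramerLundbergNodes_add_two (k := k) (by omega)] at hy
    rcases (show k + 1 < n ∨ k + 1 = n by omega) with hk1 | hk1
    · rw [cramerLundbergNodes_add_two (k := k + 1) hk1] at hy
      exact Or.inr (Or.inr (Or.inl ⟨k, hk1, hy⟩))
    · rw [show k = n - 1 by omega] at hy
      exact Or.inr (Or.inr (Or.inr hy.2))

theorem exists_alternating_cramerLundbergNodes (hn : 0 < n) (hσ : 0 < σ) (hlam : 0 < lam)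
    (hq : 0 < q) (hp : ∀ i < n, 0 < p i) (hpsum : ∑ i ∈ Finset.range n, p i = 1)
    (hαpos : ∀ i < n, 0 < α i) (hα : StrictMonoOn α (Iio n)) :
    ∃ M N, StrictAntiOn (cramerLundbergNodes M N α n) (Iic (n + 2)) ∧ ∀ k ≤ n + 2,
      0 < (-1) ^ k * (cramerLundbergNumerator σ δ lam q p α n).eval
        (cramerLundbergNodes M N α n k) := by
  set P := cramerLundbergNumerator σ δ lam q p α n
  obtain ⟨M, hM, hPM⟩ : ∃ M, 0 < M ∧ 0 < P.eval M :=
    exists_pos_eval_cramerLundbergNumerator_pos hσ hαpos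
  obtain ⟨N, hN, hPN⟩ : ∃ N < -α (n - 1), 0 < (-1) ^ n * P.eval N :=
    exists_lt_neg_one_pow_mul_eval_cramerLundbergNumerator_pos hσ
      fun i hi => neg_le_neg (apply_le_apply_sub_one hα.monotoneOn hi)
  exact ⟨M, N, strictAntiOn_cramerLundbergNodes hn hM (hαpos 0 hn) hα hN, fun k =>
    neg_one_pow_mul_eval_cramerLundbergNodes_pos hPM
      (eval_zero_cramerLundbergNumerator_neg hq hpsum hαpos)
      (fun i => neg_one_pow_mul_eval_neg_cramerLundbergNumerator_pos hlam hp hαpos hα) hPN⟩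

end CramerLundberg

/-- Roots of the Cramér–Lundberg-type equation for the spectrally negative Lévy
vitality model with mixed-exponential jumps: for `σ > 0`, `λ > 0`, `q > 0`,
weights `p₁,…,p_n > 0` summing to 1 (indexed `0,…,n-1`) and distinct rates
`0 < α₁ < … < α_n`, the function
`h y = σ²y²/2 - δy + ∑ᵢ λ pᵢ αᵢ/(y + αᵢ) - λ - q`
has exactly `n + 2` real zeros: exactly one in `(0,∞)`, one in `(-α₁, 0)`, one in
each `(-α_{i+1}, -α_i)` for `i = 1,…,n-1`, and one in `(-∞, -α_n)` (so that the
zeros satisfy `θ_{n+2} < … < θ₂ < 0 < θ₁`), and every zero of `h` lies in one of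
these intervals. -/
theorem cramer_lundberg_roots
    (n : ℕ) (hn : 1 ≤ n) (σ δ lam q : ℝ)
    (hσ : 0 < σ) (hlam : 0 < lam) (hq : 0 < q)
    (p α : ℕ → ℝ)
    (hp : ∀ i < n, 0 < p i) (hpsum : ∑ i ∈ Finset.range n, p i = 1)
    (hαpos : ∀ i < n, 0 < α i)
    (hαmono : ∀ i j, i < j → j < n → α i < α j)
    (h : ℝ → ℝ)
    (hdef : ∀ y, h y =
      1 / 2 * σ ^ 2 * y ^ 2 - δ * y +
        (∑ i ∈ Finset.range n, lam * p i * α i / (y + α i)) - lam - q) :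
    (∃! y, y ∈ Set.Ioi (0:ℝ) ∧ h y = 0) ∧
    (∃! y, y ∈ Set.Ioo (-(α 0)) (0:ℝ) ∧ h y = 0) ∧
    (∀ i : ℕ, i + 1 < n →
      ∃! y, y ∈ Set.Ioo (-(α (i + 1))) (-(α i)) ∧ h y = 0) ∧
    (∃! y, y ∈ Set.Iio (-(α (n - 1))) ∧ h y = 0) ∧
    (∀ y : ℝ, (∀ i < n, y ≠ -(α i)) → h y = 0 →
      y ∈ Set.Ioi (0:ℝ) ∨ y ∈ Set.Ioo (-(α 0)) (0:ℝ) ∨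
        (∃ i : ℕ, i + 1 < n ∧ y ∈ Set.Ioo (-(α (i + 1))) (-(α i))) ∨
        y ∈ Set.Iio (-(α (n - 1)))) := by
  obtain rfl : h = cramerLundbergFun σ δ lam q p α n := funext hdef
  have hα : StrictMonoOn α (Iio n) := fun i hi j hj hij => hαmono i j hij hj
  obtain ⟨M, N, ht, hsign⟩ :=
    exists_alternating_cramerLundbergNodes (δ := δ) hn hσ hlam hq hp hpsum hαpos hα
  have hdeg : (cramerLundbergNumerator σ δ lam q p α n).natDegree ≤ n + 2 :=
    natDegree_cramerLundbergNumerator_le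
  have htα : ∀ i < n, cramerLundbergNodes M N α n (i + 2) = -α i :=
    fun _ => cramerLundbergNodes_add_two
  refine ⟨(existsUnique_cramerLundbergFun_eq_zero_iff
      fun y hy i hi => ((neg_neg_of_pos (hαpos i hi)).trans hy).ne').2
      (existsUnique_isRoot_mem_Ioi_of_alternating hdeg ht hsign (by omega)),
    (existsUnique_cramerLundbergFun_eq_zero_iff fun y hy i hi =>
      ((neg_le_neg (hα.monotoneOn hn hi i.zero_le)).trans_lt hy.1).ne').2 ?_,
    fun i hi => (existsUnique_cramerLundbergFun_eq_zero_iff fun y hy j hj =>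
      ne_neg_of_mem_Ioo_neg hα hi hj hy).2 ?_,
    (existsUnique_cramerLundbergFun_eq_zero_iff fun y hy i hi =>
      (hy.trans_le (neg_le_neg (apply_le_apply_sub_one hα.monotoneOn hi))).ne).2 ?_,
    fun y hy hy0 => ?_⟩
  · rw [← htα 0 hn]
    exact existsUnique_isRoot_mem_Ioo_of_alternating hdeg ht hsign (k := 1) (by omega)
  · rw [← htα i (by omega), ← htα (i + 1) hi]
    exact existsUnique_isRoot_mem_Ioo_of_alternating hdeg ht hsign (k := i + 2) (by omega)
  · rw [← htα (n - 1) (by omega), show n - 1 + 2 = n + 2 - 1 by omega]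
    exact existsUnique_isRoot_mem_Iio_of_alternating hdeg ht hsign (by omega)
  · obtain ⟨k, hk, hyk⟩ := exists_mem_Ioo_of_isRoot_of_alternating hdeg ht hsign
      ((isRoot_cramerLundbergNumerator_iff hy).2 hy0)
    exact cramerLundbergNodes_gap_cases hn hk hyk
end
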